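/- Consider a forgetful PIN model, i.e. a PIN model with parameters (𝒜, ρ, P, φ) in which φ_{ij}(ℓ) = R_{ℓj} for all i, j, ℓ ∈ 𝒜 for some row-stochastic matrix R, on a sequence of interaction graphs G_n (G_n having n nodes and at least one link) with total mixing gaps W_{G_n} → 0 as n → ∞. Assume that the row-stochastic matrix S = (1−ρ)P + ρR is irreducible, and let π ∈ P(𝒜) be its unique invariant probability vector (Sᵀπ = π). For each n ≥ 2 let μ_n be a stationary distribution of the PIN model on G_n. Then for every δ > 0, lim_{n→∞} μ_n({x : ‖θ(x) − π‖₂ < δ}) = 1. -/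

import Mathlib

open Finset Filter

noncomputable section

/-- The empirical type (state frequencies) of a configuration. -/
def confType {V A : Type*} [Fintype V] [DecidableEq A] (x : V → A) (i : A) : ℝ :=
  ((Finset.univ.filter fun v => x v = i).card : ℝ) / (Fintype.card V : ℝ)

/-- The boundary (empirical link-pair frequencies) of a configuration. -/
def boundary {V A : Type*} [DecidableEq A] (E : Finset (V × V)) (x : V → A) (i j : A) : ℝ :=
  ((E.filter fun e => x e.1 = i ∧ x e.2 = j).card : ℝ) / (E.card : ℝ)

/-- Off-diagonal part of the PIN transition matrix. -/
def Toff {V A : Type*} [Fintype V] [DecidableEq V] [DecidableEq A]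
    (E : Finset (V × V)) (ρ : ℝ) (P : A → A → ℝ) (φ : A → A → A → ℝ) (x y : V → A) : ℝ :=
  if (Finset.univ.filter fun v => x v ≠ y v).card = 1 then
    ∑ u ∈ Finset.univ.filter fun v => x v ≠ y v,
      ((1 - ρ) * (1 / (Fintype.card V : ℝ)) * P (x u) (y u)
        + (ρ / (E.card : ℝ)) * ∑ e ∈ E.filter fun e => e.1 = u, φ (x u) (y u) (x e.2))
  else 0

/-- The PIN transition matrix. -/
def pinTrans {V A : Type*} [Fintype V] [DecidableEq V] [Fintype A] [DecidableEq A]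
    (E : Finset (V × V)) (ρ : ℝ) (P : A → A → ℝ) (φ : A → A → A → ℝ) (x y : V → A) : ℝ :=
  if x = y then 1 - ∑ z : V → A, Toff E ρ P φ x z else Toff E ρ P φ x y

/-- The mean drift of the PIN model. -/
def meanDrift {V A : Type*} [Fintype V] [DecidableEq V] [Fintype A] [DecidableEq A]
    (E : Finset (V × V)) (ρ : ℝ) (P : A → A → ℝ) (φ : A → A → A → ℝ) (x : V → A) (i : A) : ℝ :=
  (Fintype.card V : ℝ) * ∑ y : V → A, pinTrans E ρ P φ x y * (confType y i - confType x i)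

/-- The limit drift of the PIN model. -/
def limitDrift {A : Type*} [Fintype A] (ρ : ℝ) (P : A → A → ℝ) (φ : A → A → A → ℝ)
    (θ : A → ℝ) (i : A) : ℝ :=
  ((1 - ρ) * ∑ j, P j i * θ j) + (ρ * ∑ ℓ, θ ℓ * ∑ j, φ j i ℓ * θ j) - θ i

/-- The linear operator Q acting on boundaries. -/
def Qop {A : Type*} [Fintype A] (φ : A → A → A → ℝ) (ξ : A → A → ℝ) (i : A) : ℝ :=
  (∑ ℓ, ∑ j, ξ j ℓ * φ j i ℓ) - ∑ ℓ, ξ i ℓ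

/-- Membership in the probability simplex over `A`. -/
def inSimplex {A : Type*} [Fintype A] (θ : A → ℝ) : Prop :=
  (∀ i, 0 ≤ θ i) ∧ ∑ i, θ i = 1

/-- The hypotheses on the parameters of a PIN model: `ρ ∈ [0,1]`, `P` and each `φ(ℓ)`
row-stochastic and nonnegative, the interaction graph nonempty and without self-loops. -/
def IsPinModel {V A : Type*} [Fintype A] (E : Finset (V × V)) (ρ : ℝ)
    (P : A → A → ℝ) (φ : A → A → A → ℝ) : Prop :=
  0 ≤ ρ ∧ ρ ≤ 1 ∧ (∀ i j, 0 ≤ P i j) ∧ (∀ i, ∑ j, P i j = 1) ∧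
    (∀ i j ℓ, 0 ≤ φ i j ℓ) ∧ (∀ i ℓ, ∑ j, φ i j ℓ = 1) ∧
    E.Nonempty ∧ ∀ e ∈ E, e.1 ≠ e.2

/-- Stationary distribution of a PIN model. -/
def IsStationaryPin {V A : Type*} [Fintype V] [DecidableEq V] [Fintype A] [DecidableEq A]
    (E : Finset (V × V)) (ρ : ℝ) (P : A → A → ℝ) (φ : A → A → A → ℝ)
    (μ : (V → A) → ℝ) : Prop :=
  (∀ x, 0 ≤ μ x) ∧ (∑ x : V → A, μ x = 1) ∧
    ∀ y : V → A, ∑ x : V → A, μ x * pinTrans E ρ P φ x y = μ y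

/-- The total mixing gap of a graph. -/
def mixingGap {V : Type*} [Fintype V] [DecidableEq V] (E : Finset (V × V)) : ℝ :=
  sSup {w : ℝ | ∃ S U : Finset V, Disjoint S U ∧
    w = |((E.filter fun e => e.1 ∈ S ∧ e.2 ∈ U).card : ℝ) / (E.card : ℝ) -
      ((S.card : ℝ) * (U.card : ℝ)) / ((Fintype.card V : ℝ) * ((Fintype.card V : ℝ) - 1))|}

open Classical in
/-- Total `μ`-mass of the set of configurations satisfying `p`. -/
def massOf {X : Type*} [Fintype X] (μ : X → ℝ) (p : X → Prop) : ℝ :=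
  ∑ x, if p x then μ x else 0

/-!
The limit drift of a forgetful model is the linear field `θ ↦ θ S - θ`, whose only zero on the
simplex is `π`. As `S` is irreducible, the lazy matrix `D = (1 + S) / 2` is primitive, so by
Dobrushin's coefficient some power `D ^ K` halves the squared norm of zero-sum vectors; then
`M = ∑_{k < K} D ^ k (D ^ k)ᵀ` turns `(θ - π)ᵀ M (θ - π)` into a strict Lyapunov function,
the sum telescoping. The mean drift of the chain differs from the limit drift by
`ρ Q(ξ - θ ⊗ θ)`, whose size is controlled by the marginals of the boundary `ξ`; these are
within `5 W_G` of the type `θ`. A single update moves the type by `O(1 / n)`, so `n` times the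
expected one-step change of the Lyapunov function is at most
`-‖θ - π‖² + O(W_G + 1 / n)`. Under a stationary distribution this expectation vanishes,
hence `E ‖θ - π‖² = O(W_G + 1 / n) → 0`, and Chebyshev's inequality concludes.
-/

namespace Matrix

theorem half_smul_one_add_apply_nonneg {A : Type*} [DecidableEq A] {S : Matrix A A ℝ}
    (hS : ∀ i j, 0 ≤ S i j) (i j : A) : 0 ≤ ((2⁻¹ : ℝ) • (1 + S)) i j := by
  have : (0 : ℝ) ≤ (1 : Matrix A A ℝ) i j := by rw [one_apply]; split_ifs <;> norm_num
  simpa using mul_nonneg (by norm_num : (0 : ℝ) ≤ 2⁻¹) (add_nonneg this (hS i j))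

variable {A : Type*} [Fintype A]

theorem sum_abs_vecMul_le {B : Matrix A A ℝ} {ε : ℝ} (hε : ∀ i j, ε ≤ B i j)
    (hrow : ∀ i, ∑ j, B i j = 1) {v : A → ℝ} (hv : ∑ i, v i = 0) :
    ∑ j, |(v ᵥ* B) j| ≤ (1 - Fintype.card A * ε) * ∑ i, |v i| := by
  have hcol (j : A) : (v ᵥ* B) j = ∑ i, v i * (B i j - ε) := by
    simp [vecMul, dotProduct, mul_sub, sum_sub_distrib, ← sum_mul, hv]
  calc ∑ j, |(v ᵥ* B) j| ≤ ∑ j, ∑ i, |v i| * (B i j - ε) := by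
        refine sum_le_sum fun j _ => (hcol j ▸ abs_sum_le_sum_abs _ _).trans ?_
        simp [abs_mul, abs_of_nonneg (sub_nonneg.2 (hε _ j))]
    _ = ∑ i, |v i| * (1 - Fintype.card A * ε) := by
        rw [sum_comm]
        simp [← mul_sum, sum_sub_distrib, hrow]
    _ = (1 - Fintype.card A * ε) * ∑ i, |v i| := by rw [← sum_mul, mul_comm]

theorem add_dotProduct_mulVec_add (M : Matrix A A ℝ) (v d : A → ℝ) :
    (v + d) ⬝ᵥ M *ᵥ (v + d)
      = v ⬝ᵥ M *ᵥ v + ((M + Mᵀ) *ᵥ v) ⬝ᵥ d + d ⬝ᵥ M *ᵥ d := by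
  simp only [mulVec_add, add_dotProduct, dotProduct_add, add_mulVec, mulVec_transpose]
  rw [dotProduct_mulVec v M d, dotProduct_comm (M *ᵥ v) d]
  ring

theorem abs_mulVec_apply_le {M : Matrix A A ℝ} {C : ℝ} (hM : ∀ i j, |M i j| ≤ C)
    (v : A → ℝ) (i : A) : |(M *ᵥ v) i| ≤ C * ∑ j, |v j| := by
  rw [mul_sum]
  refine (abs_sum_le_sum_abs _ _).trans (sum_le_sum fun j _ => ?_)
  rw [abs_mul]
  exact mul_le_mul_of_nonneg_right (hM i j) (abs_nonneg _)

theorem abs_dotProduct_mulVec_self_le {M : Matrix A A ℝ} {C : ℝ} (hM : ∀ i j, |M i j| ≤ C)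
    (d : A → ℝ) : |d ⬝ᵥ M *ᵥ d| ≤ C * (∑ i, |d i|) ^ 2 := by
  calc |d ⬝ᵥ M *ᵥ d| ≤ ∑ i, |d i| * (C * ∑ j, |d j|) :=
        (abs_sum_le_sum_abs _ _).trans (sum_le_sum fun i _ => by
          rw [abs_mul]; exact mul_le_mul_of_nonneg_left (abs_mulVec_apply_le hM d i) (abs_nonneg _))
    _ = C * (∑ i, |d i|) ^ 2 := by rw [← sum_mul]; ring

variable [DecidableEq A]

theorem sum_vecMul_of_mem_rowStochastic {B : Matrix A A ℝ} (hB : B ∈ rowStochastic ℝ A)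
    (v : A → ℝ) : ∑ j, (v ᵥ* B) j = ∑ i, v i := by
  simpa [dotProduct, one_vecMul_of_mem_rowStochastic hB] using (dotProduct_mulVec v B 1).symm

theorem exists_pow_contracting [Nonempty A] {B : Matrix A A ℝ} (hB : B ∈ rowStochastic ℝ A)
    (hpos : ∀ i j, 0 < B i j) :
    ∃ γ : ℝ, 0 ≤ γ ∧ γ < 1 ∧ ∀ (t : ℕ) (v : A → ℝ), ∑ i, v i = 0 →
      ∑ j, |(v ᵥ* B ^ t) j| ≤ γ ^ t * ∑ i, |v i| := by
  obtain ⟨⟨i₀, j₀⟩, hmin⟩ := Finite.exists_min fun p : A × A => B p.1 p.2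
  set ε := B i₀ j₀
  have hε : ∀ i j, ε ≤ B i j := fun i j => hmin (i, j)
  have hγ0 : 0 ≤ 1 - Fintype.card A * ε := by
    have : ∑ _j : A, ε ≤ ∑ j, B i₀ j := sum_le_sum fun j _ => hε i₀ j
    simpa [sum_row_of_mem_rowStochastic hB] using this
  have hγ1 : 1 - Fintype.card A * ε < 1 := by
    have : (0 : ℝ) < Fintype.card A := by exact_mod_cast Fintype.card_pos
    have := hpos i₀ j₀
    nlinarith
  refine ⟨_, hγ0, hγ1, fun t => ?_⟩
  induction t with
  | zero => simp
  | succ t ih =>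
    intro v hv
    have hvt : ∑ i, (v ᵥ* B ^ t) i = 0 := by
      rw [sum_vecMul_of_mem_rowStochastic (pow_mem hB t), hv]
    rw [pow_succ, ← vecMul_vecMul, pow_succ, mul_comm _ (1 - _), mul_assoc]
    exact (sum_abs_vecMul_le hε (sum_row_of_mem_rowStochastic hB) hvt).trans
      (mul_le_mul_of_nonneg_left (ih v hv) hγ0)

theorem exists_sq_contracting_of_isPrimitive [Nonempty A] {B : Matrix A A ℝ}
    (hB : B ∈ rowStochastic ℝ A) (hprim : B.IsPrimitive) :
    ∃ K : ℕ, ∀ v : A → ℝ, ∑ i, v i = 0 →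
      (v ᵥ* B ^ K) ⬝ᵥ (v ᵥ* B ^ K) ≤ 2⁻¹ * (v ⬝ᵥ v) := by
  obtain ⟨k, -, hpos⟩ := hprim.exists_pos_pow
  obtain ⟨γ, hγ0, hγ1, hγ⟩ := exists_pow_contracting (pow_mem hB k) hpos
  have hcard : (0 : ℝ) < Fintype.card A := by exact_mod_cast Fintype.card_pos
  obtain ⟨t, ht⟩ := exists_pow_lt_of_lt_one (inv_pos.2 (mul_pos two_pos hcard))
    (pow_lt_one₀ hγ0 hγ1 two_ne_zero)
  refine ⟨k * t, fun v hv => ?_⟩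
  have hl1 : ∑ j, |(v ᵥ* B ^ (k * t)) j| ≤ γ ^ t * ∑ i, |v i| := by
    rw [pow_mul]; exact hγ t v hv
  have hv1 : (∑ i, |v i|) ^ 2 ≤ Fintype.card A * (v ⬝ᵥ v) := by
    simpa [dotProduct, ← sq] using sq_sum_le_card_mul_sum_sq (s := univ) (f := (|v ·|))
  calc (v ᵥ* B ^ (k * t)) ⬝ᵥ (v ᵥ* B ^ (k * t))
      ≤ (∑ j, |(v ᵥ* B ^ (k * t)) j|) ^ 2 := by
        simpa [dotProduct, ← sq] using sum_sq_le_sq_sum_of_nonneg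
          (s := univ) (f := fun j => |(v ᵥ* B ^ (k * t)) j|) fun _ _ => abs_nonneg _
    _ ≤ (γ ^ t * ∑ i, |v i|) ^ 2 :=
        pow_le_pow_left₀ (sum_nonneg fun _ _ => abs_nonneg _) hl1 2
    _ = (γ ^ 2) ^ t * (∑ i, |v i|) ^ 2 := by ring
    _ ≤ (2 * (Fintype.card A : ℝ))⁻¹ * (Fintype.card A * (v ⬝ᵥ v)) :=
        mul_le_mul ht.le hv1 (sq_nonneg _) (by positivity)
    _ = 2⁻¹ * (v ⬝ᵥ v) := by field_simp

theorem pow_apply_le_one_add_pow_apply {S : Matrix A A ℝ} (hS : ∀ i j, 0 ≤ S i j) {k K : ℕ}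
    (hkK : k ≤ K) (i j : A) : (S ^ k) i j ≤ ((1 + S) ^ K) i j := by
  have hterm : ∀ m ∈ antidiagonal K, 0 ≤ K.choose m.1 • (S ^ m.2) i j := fun m _ =>
    nsmul_nonneg (pow_apply_nonneg hS _ i j) _
  have hmem : (K - k, k) ∈ antidiagonal K := mem_antidiagonal.2 (by simp [hkK])
  calc (S ^ k) i j ≤ K.choose (K - k) • (S ^ k) i j :=
        le_smul_of_one_le_left (pow_apply_nonneg hS _ i j) (Nat.choose_pos (Nat.sub_le K k))
    _ ≤ ∑ m ∈ antidiagonal K, K.choose m.1 • (S ^ m.2) i j :=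
        single_le_sum hterm hmem
    _ = ((1 + S) ^ K) i j := by
        simp only [(Commute.one_left S).add_pow', sum_apply, one_pow, one_mul, smul_apply]

theorem IsIrreducible.isPrimitive_half_smul_one_add [Nonempty A] {S : Matrix A A ℝ}
    (hS : S.IsIrreducible) : ((2⁻¹ : ℝ) • (1 + S)).IsPrimitive := by
  choose k hk0 hkpos using (isIrreducible_iff_exists_pow_pos hS.nonneg).1 hS
  have hle (i j : A) : k i j ≤ ∑ p : A × A, k p.1 p.2 :=
    single_le_sum (f := fun p : A × A => k p.1 p.2) (fun _ _ => Nat.zero_le _)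
      (mem_univ (i, j))
  obtain ⟨i₀⟩ := ‹Nonempty A›
  refine ⟨fun i j => ?_, _, (hk0 i₀ i₀).trans_le (hle i₀ i₀), fun i j => ?_⟩
  · exact half_smul_one_add_apply_nonneg hS.nonneg i j
  · rw [smul_pow, smul_apply, smul_eq_mul]
    exact mul_pos (by positivity)
      ((hkpos i j).trans_le (pow_apply_le_one_add_pow_apply hS.nonneg (hle i j) i j))

theorem half_smul_one_add_mem_rowStochastic {S : Matrix A A ℝ} (hS : S ∈ rowStochastic ℝ A) :
    (2⁻¹ : ℝ) • (1 + S) ∈ rowStochastic ℝ A := by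
  rw [mem_rowStochastic] at hS ⊢
  refine ⟨half_smul_one_add_apply_nonneg hS.1, ?_⟩
  rw [smul_mulVec, add_mulVec, one_mulVec, hS.2]
  ext
  simp only [Pi.smul_apply, Pi.add_apply, Pi.one_apply, smul_eq_mul]
  norm_num

theorem dotProduct_sum_pow_mul_transpose_le (D : Matrix A A ℝ) (K : ℕ) (v : A → ℝ) :
    ((∑ k ∈ Finset.range K, D ^ k * (D ^ k)ᵀ) *ᵥ v) ⬝ᵥ (v ᵥ* D - v)
      ≤ 2⁻¹ * ((v ᵥ* D ^ K) ⬝ᵥ (v ᵥ* D ^ K) - v ⬝ᵥ v) := by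
  set w : ℕ → A → ℝ := fun k => v ᵥ* D ^ k
  have hterm (k : ℕ) : ((D ^ k * (D ^ k)ᵀ) *ᵥ v) ⬝ᵥ (v ᵥ* D - v)
      ≤ 2⁻¹ * (w (k + 1) ⬝ᵥ w (k + 1)) - 2⁻¹ * (w k ⬝ᵥ w k) := by
    have hsq : 0 ≤ (w (k + 1) - w k) ⬝ᵥ (w (k + 1) - w k) :=
      sum_nonneg fun i _ => mul_self_nonneg _
    have : ((D ^ k * (D ^ k)ᵀ) *ᵥ v) ⬝ᵥ (v ᵥ* D - v) = w k ⬝ᵥ (w (k + 1) - w k) := by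
      rw [← mulVec_mulVec, mulVec_transpose, dotProduct_comm, dotProduct_mulVec, sub_vecMul,
        vecMul_vecMul, ← pow_succ', dotProduct_comm]
    rw [this]
    simp only [dotProduct_sub, sub_dotProduct, dotProduct_comm (w k) (w (k + 1))] at hsq ⊢
    linarith
  calc ((∑ k ∈ Finset.range K, D ^ k * (D ^ k)ᵀ) *ᵥ v) ⬝ᵥ (v ᵥ* D - v)
      = ∑ k ∈ Finset.range K, ((D ^ k * (D ^ k)ᵀ) *ᵥ v) ⬝ᵥ (v ᵥ* D - v) := by
        rw [sum_mulVec, sum_dotProduct]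
    _ ≤ ∑ k ∈ Finset.range K,
          (2⁻¹ * (w (k + 1) ⬝ᵥ w (k + 1)) - 2⁻¹ * (w k ⬝ᵥ w k)) :=
        sum_le_sum fun k _ => hterm k
    _ = 2⁻¹ * ((v ᵥ* D ^ K) ⬝ᵥ (v ᵥ* D ^ K) - v ⬝ᵥ v) := by
        rw [sum_range_sub (fun k => 2⁻¹ * (w k ⬝ᵥ w k))]
        simp [w, mul_sub]

theorem exists_lyapunov_matrix [Nonempty A] {S : Matrix A A ℝ} (hS : S ∈ rowStochastic ℝ A)
    (hirr : S.IsIrreducible) :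
    ∃ M : Matrix A A ℝ, ∀ v : A → ℝ, ∑ i, v i = 0 →
      ((M + Mᵀ) *ᵥ v) ⬝ᵥ (v ᵥ* S - v) ≤ -(v ⬝ᵥ v) := by
  obtain ⟨K, hK⟩ := exists_sq_contracting_of_isPrimitive
    (half_smul_one_add_mem_rowStochastic hS) hirr.isPrimitive_half_smul_one_add
  set D : Matrix A A ℝ := (2⁻¹ : ℝ) • (1 + S)
  set M := ∑ k ∈ Finset.range K, D ^ k * (D ^ k)ᵀ
  refine ⟨M, fun v hv => ?_⟩
  have hMt : Mᵀ = M := by simp [M, transpose_sum, transpose_mul]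
  have hSD : v ᵥ* S - v = (2 : ℝ) • (v ᵥ* D - v) := by
    ext i; simp [D, vecMul_smul, vecMul_add]; ring
  rw [hMt, ← two_smul ℝ M, smul_mulVec, hSD, smul_dotProduct, dotProduct_smul, smul_eq_mul,
    smul_eq_mul]
  linarith [dotProduct_sum_pow_mul_transpose_le D K v, hK v hv]

end Matrix

section MixingGap

variable {V : Type*} [DecidableEq V]

theorem card_filter_powerset_mem_not_mem {S : Finset V} {u v : V} (hu : u ∈ S) (hv : v ∈ S)
    (huv : u ≠ v) : #{T ∈ S.powerset | u ∈ T ∧ v ∉ T} = 2 ^ (#S - 2) := by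
  have himage : {T ∈ S.powerset | u ∈ T ∧ v ∉ T}
      = ((S.erase u).erase v).powerset.image (insert u) := by
    ext T
    simp only [mem_filter, mem_powerset, mem_image]
    constructor
    · rintro ⟨hTS, huT, hvT⟩
      refine ⟨T.erase u, fun x hx => ?_, insert_erase huT⟩
      grind
    · rintro ⟨T', hT', rfl⟩
      grind
  rw [himage, card_image_of_injOn, card_powerset,
    card_erase_of_mem (mem_erase.2 ⟨huv.symm, hv⟩), card_erase_of_mem hu, Nat.sub_sub]
  have hnot : ∀ T ∈ ((S.erase u).erase v).powerset, u ∉ T := fun T hT huT => by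
    simpa using mem_powerset.1 hT huT
  intro T hT T' hT' h
  rw [← erase_insert (hnot T hT), h, erase_insert (hnot T' hT')]

theorem sum_powerset_card_filter_mem_sdiff {E : Finset (V × V)} (hloop : ∀ e ∈ E, e.1 ≠ e.2)
    (S : Finset V) :
    ∑ T ∈ S.powerset, #{e ∈ E | e.1 ∈ T ∧ e.2 ∈ S \ T}
      = #{e ∈ E | e.1 ∈ S ∧ e.2 ∈ S} * 2 ^ (#S - 2) := by
  have hedge : ∀ e ∈ E, #{T ∈ S.powerset | e.1 ∈ T ∧ e.2 ∈ S \ T}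
      = if e.1 ∈ S ∧ e.2 ∈ S then 2 ^ (#S - 2) else 0 := by
    intro e he
    split_ifs with hS
    · rw [← card_filter_powerset_mem_not_mem hS.1 hS.2 (hloop e he)]
      congr 1
      refine filter_congr fun T _ => ?_
      simp [hS.2]
    · rw [card_eq_zero, filter_eq_empty_iff]
      intro T hT ⟨h1, h2⟩
      exact hS ⟨mem_powerset.1 hT h1, (mem_sdiff.1 h2).1⟩
  simp_rw [card_filter]
  rw [sum_comm]
  simp_rw [← card_filter]
  rw [sum_congr rfl hedge, ← sum_filter, sum_const, smul_eq_mul]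

theorem sum_powerset_card_mul_card_sdiff (S : Finset V) :
    ∑ T ∈ S.powerset, #T * #(S \ T) = (#S * #S - #S) * 2 ^ (#S - 2) := by
  have hoff : ∀ e ∈ S.offDiag, e.1 ≠ e.2 := fun e he => (mem_offDiag.1 he).2.2
  have hcross : ∀ T ∈ S.powerset,
      #T * #(S \ T) = #{e ∈ S.offDiag | e.1 ∈ T ∧ e.2 ∈ S \ T} := by
    intro T hT
    rw [← card_product]
    congr 1
    ext e
    have := mem_powerset.1 hT
    simp only [mem_product, mem_filter, mem_offDiag]
    grind
  have hdiag : {e ∈ S.offDiag | e.1 ∈ S ∧ e.2 ∈ S} = S.offDiag :=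
    filter_true_of_mem fun e he => ⟨(mem_offDiag.1 he).1, (mem_offDiag.1 he).2.1⟩
  rw [sum_congr rfl hcross, sum_powerset_card_filter_mem_sdiff hoff, hdiag, offDiag_card]

variable [Fintype V]

theorem abs_sub_le_mixingGap (E : Finset (V × V)) {S U : Finset V} (h : Disjoint S U) :
    |(#{e ∈ E | e.1 ∈ S ∧ e.2 ∈ U} : ℝ) / #E -
      #S * #U / (Fintype.card V * (Fintype.card V - 1))| ≤ mixingGap E := by
  refine le_csSup (((Set.finite_range fun p : Finset V × Finset V =>
    |(#{e ∈ E | e.1 ∈ p.1 ∧ e.2 ∈ p.2} : ℝ) / #E -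
      #p.1 * #p.2 / (Fintype.card V * (Fintype.card V - 1))|).subset ?_).bddAbove)
    ⟨S, U, h, rfl⟩
  rintro _ ⟨S, U, -, rfl⟩
  exact ⟨(S, U), rfl⟩

theorem mixingGap_nonneg (E : Finset (V × V)) : 0 ≤ mixingGap E :=
  (abs_nonneg _).trans (abs_sub_le_mixingGap E (disjoint_empty_left ∅))

/-- Averaging the gap over the cuts `(T, S \ T)` of `S`: an edge inside `S` crosses
`2 ^ (#S - 2)` of the `2 ^ #S` cuts, whence the factor `4`. -/
theorem abs_card_filter_mem_mem_sub_le {E : Finset (V × V)} (hloop : ∀ e ∈ E, e.1 ≠ e.2)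
    (S : Finset V) :
    |(#{e ∈ E | e.1 ∈ S ∧ e.2 ∈ S} : ℝ) / #E -
      #S * (#S - 1) / (Fintype.card V * (Fintype.card V - 1))| ≤ 4 * mixingGap E := by
  set N : ℝ := Fintype.card V * (Fintype.card V - 1)
  set X := (#{e ∈ E | e.1 ∈ S ∧ e.2 ∈ S} : ℝ) / #E - #S * (#S - 1) / N
  have hcross : ((∑ T ∈ S.powerset, #{e ∈ E | e.1 ∈ T ∧ e.2 ∈ S \ T} : ℕ) : ℝ)
      = #{e ∈ E | e.1 ∈ S ∧ e.2 ∈ S} * 2 ^ (#S - 2) := by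
    rw [sum_powerset_card_filter_mem_sdiff hloop]; push_cast; ring
  have hprod : ((∑ T ∈ S.powerset, #T * #(S \ T) : ℕ) : ℝ)
      = #S * (#S - 1) * 2 ^ (#S - 2) := by
    rw [sum_powerset_card_mul_card_sdiff, Nat.cast_mul, Nat.cast_sub (Nat.le_mul_self _)]
    push_cast; ring
  have hsum : ∑ T ∈ S.powerset,
      ((#{e ∈ E | e.1 ∈ T ∧ e.2 ∈ S \ T} : ℝ) / #E - #T * #(S \ T) / N)
        = 2 ^ (#S - 2) * X := by
    rw [sum_sub_distrib, ← sum_div, ← sum_div]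
    push_cast at hcross hprod
    rw [hcross, hprod]
    ring
  have hbound : 2 ^ (#S - 2) * |X| ≤ 2 ^ #S * mixingGap E := by
    calc 2 ^ (#S - 2) * |X| = |∑ T ∈ S.powerset,
          ((#{e ∈ E | e.1 ∈ T ∧ e.2 ∈ S \ T} : ℝ) / #E - #T * #(S \ T) / N)| := by
          rw [hsum, abs_mul, abs_of_pos (by positivity : (0 : ℝ) < 2 ^ (#S - 2))]
      _ ≤ ∑ T ∈ S.powerset, mixingGap E :=
          (abs_sum_le_sum_abs _ _).trans
            (sum_le_sum fun T _ => abs_sub_le_mixingGap E disjoint_sdiff)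
      _ = 2 ^ #S * mixingGap E := by simp
  have hpow : (2 : ℝ) ^ #S ≤ 4 * 2 ^ (#S - 2) := by
    calc (2 : ℝ) ^ #S ≤ 2 ^ (#S - 2 + 2) := pow_le_pow_right₀ one_le_two (by omega)
      _ = 4 * 2 ^ (#S - 2) := by ring
  have hW := mixingGap_nonneg E
  nlinarith [pow_pos (two_pos : (0 : ℝ) < 2) (#S - 2), abs_nonneg X]

theorem abs_add_div_sub_div_le {a b m s n W : ℝ} (hn : 2 ≤ n)
    (ha : |a / m - s * (n - s) / (n * (n - 1))| ≤ W)
    (hb : |b / m - s * (s - 1) / (n * (n - 1))| ≤ 4 * W) : |(a + b) / m - s / n| ≤ 5 * W := by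
  have hsplit : (a + b) / m - s / n
      = (a / m - s * (n - s) / (n * (n - 1))) + (b / m - s * (s - 1) / (n * (n - 1))) := by
    have : n - 1 ≠ 0 := by linarith
    field_simp
    ring
  rw [hsplit]
  linarith [abs_add_le (a / m - s * (n - s) / (n * (n - 1))) (b / m - s * (s - 1) / (n * (n - 1)))]

theorem abs_card_filter_fst_mem_div_sub_le {E : Finset (V × V)} (hloop : ∀ e ∈ E, e.1 ≠ e.2)
    (hV : 2 ≤ Fintype.card V) (S : Finset V) :
    |(#{e ∈ E | e.1 ∈ S} : ℝ) / #E - #S / Fintype.card V| ≤ 5 * mixingGap E := by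
  have hsplit : #{e ∈ E | e.1 ∈ S}
      = #{e ∈ E | e.1 ∈ S ∧ e.2 ∈ Sᶜ} + #{e ∈ E | e.1 ∈ S ∧ e.2 ∈ S} := by
    rw [← card_union_of_disjoint (disjoint_filter.2 fun e _ h1 h2 => (mem_compl.1 h1.2) h2.2)]
    congr 1
    ext e
    simp only [mem_filter, mem_union, mem_compl]
    tauto
  have hcross := abs_sub_le_mixingGap E (disjoint_compl_right (a := S))
  rw [card_compl, Nat.cast_sub (card_le_univ S)] at hcross
  rw [hsplit, Nat.cast_add]
  exact abs_add_div_sub_div_le (by exact_mod_cast hV) hcross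
    (abs_card_filter_mem_mem_sub_le hloop S)

theorem abs_card_filter_snd_mem_div_sub_le {E : Finset (V × V)} (hloop : ∀ e ∈ E, e.1 ≠ e.2)
    (hV : 2 ≤ Fintype.card V) (S : Finset V) :
    |(#{e ∈ E | e.2 ∈ S} : ℝ) / #E - #S / Fintype.card V| ≤ 5 * mixingGap E := by
  have hsplit : #{e ∈ E | e.2 ∈ S}
      = #{e ∈ E | e.1 ∈ Sᶜ ∧ e.2 ∈ S} + #{e ∈ E | e.1 ∈ S ∧ e.2 ∈ S} := by
    rw [← card_union_of_disjoint (disjoint_filter.2 fun e _ h1 h2 => (mem_compl.1 h1.1) h2.1)]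
    congr 1
    ext e
    simp only [mem_filter, mem_union, mem_compl]
    tauto
  have hcross := abs_sub_le_mixingGap E (disjoint_compl_left (a := S))
  rw [card_compl, Nat.cast_sub (card_le_univ S), mul_comm (_ - _ : ℝ)] at hcross
  rw [hsplit, Nat.cast_add]
  exact abs_add_div_sub_div_le (by exact_mod_cast hV) hcross
    (abs_card_filter_mem_mem_sub_le hloop S)

end MixingGap

section Statistics

variable {V A : Type*} [Fintype A] [DecidableEq A] {E : Finset (V × V)}

theorem sum_boundary_mul (x : V → A) (G : A → A → ℝ) :
    ∑ j, ∑ ℓ, boundary E x j ℓ * G j ℓ = (∑ e ∈ E, G (x e.1) (x e.2)) / #E := by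
  rw [← sum_fiberwise' E (fun e => (x e.1, x e.2)) fun p => G p.1 p.2, sum_div,
    Fintype.sum_prod_type]
  simp [boundary, div_mul_eq_mul_div]

theorem sum_boundary_right (x : V → A) (i : A) :
    ∑ ℓ, boundary E x i ℓ = #{e ∈ E | x e.1 = i} / #E := by
  rw [card_eq_sum_card_fiberwise (f := fun e => x e.2) (t := univ) fun _ _ => mem_univ _,
    Nat.cast_sum, sum_div]
  simp [boundary, filter_filter]

theorem sum_boundary_left (x : V → A) (j : A) :
    ∑ i, boundary E x i j = #{e ∈ E | x e.2 = j} / #E := by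
  rw [card_eq_sum_card_fiberwise (f := fun e => x e.1) (t := univ) fun _ _ => mem_univ _,
    Nat.cast_sum, sum_div]
  simp [boundary, filter_filter, and_comm]

variable [Fintype V]

theorem sum_confType_mul (x : V → A) (G : A → ℝ) :
    ∑ j, confType x j * G j = (∑ u, G (x u)) / Fintype.card V := by
  rw [← sum_fiberwise' univ x G, sum_div]
  simp [confType, div_mul_eq_mul_div]

theorem sum_confType [Nonempty V] (x : V → A) : ∑ i, confType x i = 1 := by
  have hn : (Fintype.card V : ℝ) ≠ 0 := by exact_mod_cast Fintype.card_ne_zero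
  simpa [hn] using sum_confType_mul x fun _ => 1

theorem inSimplex_confType [Nonempty V] (x : V → A) : inSimplex (confType x) :=
  ⟨fun i => by unfold confType; positivity, sum_confType x⟩

variable [DecidableEq V]

theorem abs_sum_boundary_left_sub_confType_le (hloop : ∀ e ∈ E, e.1 ≠ e.2)
    (hV : 2 ≤ Fintype.card V) (x : V → A) (ℓ : A) :
    |∑ j, boundary E x j ℓ - confType x ℓ| ≤ 5 * mixingGap E := by
  simpa [sum_boundary_left, confType] using
    abs_card_filter_snd_mem_div_sub_le hloop hV {v | x v = ℓ}

theorem abs_sum_boundary_right_sub_confType_le (hloop : ∀ e ∈ E, e.1 ≠ e.2)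
    (hV : 2 ≤ Fintype.card V) (x : V → A) (i : A) :
    |∑ ℓ, boundary E x i ℓ - confType x i| ≤ 5 * mixingGap E := by
  simpa [sum_boundary_right, confType] using
    abs_card_filter_fst_mem_div_sub_le hloop hV {v | x v = i}

theorem sum_abs_sum_boundary_sub_mul_le (hloop : ∀ e ∈ E, e.1 ≠ e.2)
    (hV : 2 ≤ Fintype.card V) (x : V → A) :
    ∑ ℓ, |∑ j, (boundary E x j ℓ - confType x j * confType x ℓ)|
        + ∑ i, |∑ ℓ, (boundary E x i ℓ - confType x i * confType x ℓ)|
      ≤ 10 * Fintype.card A * mixingGap E := by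
  have : Nonempty V := Fintype.card_pos_iff.1 (by omega)
  calc _ ≤ ∑ _ℓ : A, 5 * mixingGap E + ∑ _i : A, 5 * mixingGap E := by
        refine add_le_add (sum_le_sum fun ℓ _ => ?_) (sum_le_sum fun i _ => ?_)
        · simpa [sum_sub_distrib, ← sum_mul, sum_confType] using
            abs_sum_boundary_left_sub_confType_le hloop hV x ℓ
        · simpa [sum_sub_distrib, ← mul_sum, sum_confType] using
            abs_sum_boundary_right_sub_confType_le hloop hV x i
    _ = 10 * Fintype.card A * mixingGap E := by simp; ring

end Statistics

theorem confType_update {V A : Type*} [Fintype V] [DecidableEq V] [DecidableEq A] (x : V → A)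
    (u : V) (a : A) :
    confType (Function.update x u a)
      = confType x + (Fintype.card V : ℝ)⁻¹ • (Pi.single a 1 - Pi.single (x u) 1) := by
  ext i
  set f : V → ℝ := fun v => if x v = i then 1 else 0
  have hupd : (fun v => if Function.update x u a v = i then (1 : ℝ) else 0)
      = Function.update f u (if a = i then 1 else 0) := by
    ext v
    by_cases hv : v = u
    · subst hv; simp
    · simp [f, hv]
  have h1 := sum_update_of_mem (mem_univ u) f (if a = i then (1 : ℝ) else 0)
  have h2 := sum_eq_add_sum_sdiff_singleton_of_mem (mem_univ u) f
  simp only [confType, natCast_card_filter, hupd, h1, Pi.add_apply, Pi.smul_apply, Pi.sub_apply,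
    Pi.single_apply, smul_eq_mul]
  rw [h2]
  simp only [f, eq_comm (a := i)]
  ring

section LimitDrift

open Matrix

variable {A : Type*} [Fintype A] {ρ : ℝ} {P R : A → A → ℝ} {φ : A → A → A → ℝ}

theorem Qop_sub (ξ ζ : A → A → ℝ) (i : A) :
    Qop φ (ξ - ζ) i = Qop φ ξ i - Qop φ ζ i := by
  simp only [Qop, Pi.sub_apply, sub_mul, sum_sub_distrib]
  ring

theorem limitDrift_eq {θ : A → ℝ} (hθ : ∑ i, θ i = 1) (i : A) :
    limitDrift ρ P φ θ i
      = (1 - ρ) * (∑ j, P j i * θ j - θ i) + ρ * Qop φ (fun j ℓ => θ j * θ ℓ) i := by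
  have hdiag : ∑ ℓ, θ i * θ ℓ = θ i := by rw [← mul_sum, hθ, mul_one]
  have hpair : ∑ ℓ, θ ℓ * ∑ j, φ j i ℓ * θ j
      = ∑ ℓ, ∑ j, θ j * θ ℓ * φ j i ℓ := by
    simp only [mul_sum]
    exact sum_congr rfl fun _ _ => sum_congr rfl fun _ _ => by ring
  simp only [limitDrift, Qop, hdiag, hpair]
  ring

theorem limitDrift_of_forgetful (hforget : ∀ i j ℓ, φ i j ℓ = R ℓ j) {θ : A → ℝ}
    (hθ : ∑ i, θ i = 1) :
    limitDrift ρ P φ θ = θ ᵥ* Matrix.of (fun i j => (1 - ρ) * P i j + ρ * R i j) - θ := by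
  ext i
  have hR (ℓ : A) : ∑ j, φ j i ℓ * θ j = R ℓ i := by
    simp [hforget, ← mul_sum, hθ]
  simp only [limitDrift, hR, Pi.sub_apply, vecMul, dotProduct, of_apply, mul_add,
    sum_add_distrib, mul_sum]
  congr 2 <;> exact sum_congr rfl fun _ _ => by ring

theorem abs_dotProduct_Qop_le_of_forgetful (hforget : ∀ i j ℓ, φ i j ℓ = R ℓ j)
    (hR : ∀ i j, 0 ≤ R i j) (hRrow : ∀ i, ∑ j, R i j = 1) {w : A → ℝ} {B : ℝ}
    (hw : ∀ i, |w i| ≤ B) (ξ : A → A → ℝ) :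
    |w ⬝ᵥ Qop φ ξ| ≤ B * (∑ ℓ, |∑ j, ξ j ℓ| + ∑ i, |∑ ℓ, ξ i ℓ|) := by
  have hRw (ℓ : A) : |∑ i, R ℓ i * w i| ≤ B :=
    calc |∑ i, R ℓ i * w i| ≤ ∑ i, R ℓ i * B :=
          (abs_sum_le_sum_abs _ _).trans (sum_le_sum fun i _ => by
            rw [abs_mul, abs_of_nonneg (hR ℓ i)]
            exact mul_le_mul_of_nonneg_left (hw i) (hR ℓ i))
      _ = B := by rw [← sum_mul, hRrow, one_mul]
  have hQ : w ⬝ᵥ Qop φ ξ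
      = ∑ ℓ, (∑ j, ξ j ℓ) * ∑ i, R ℓ i * w i - ∑ i, w i * ∑ ℓ, ξ i ℓ := by
    simp only [dotProduct, Qop, hforget, mul_sub, sum_sub_distrib, sum_mul, mul_sum]
    rw [sum_comm]
    congr 1
    exact sum_congr rfl fun _ _ => sum_congr rfl fun _ _ => sum_congr rfl fun _ _ => by ring
  rw [hQ, mul_add, mul_sum, mul_sum]
  refine (abs_sub _ _).trans (add_le_add
    ((abs_sum_le_sum_abs _ _).trans (sum_le_sum fun ℓ _ => ?_))
    ((abs_sum_le_sum_abs _ _).trans (sum_le_sum fun i _ => ?_)))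
  · rw [abs_mul, mul_comm B]
    exact mul_le_mul_of_nonneg_left (hRw ℓ) (abs_nonneg _)
  · rw [abs_mul]
    exact mul_le_mul_of_nonneg_right (hw i) (abs_nonneg _)

theorem sum_abs_sub_le_two {θ π : A → ℝ} (hθ : inSimplex θ) (hπ : inSimplex π) :
    ∑ i, |θ i - π i| ≤ 2 := by
  calc ∑ i, |θ i - π i| ≤ ∑ i, (θ i + π i) := sum_le_sum fun i _ => by
        rw [abs_le]; constructor <;> linarith [hθ.1 i, hπ.1 i]
    _ = 2 := by rw [sum_add_distrib, hθ.2, hπ.2]; norm_num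

theorem abs_add_transpose_mulVec_sub_le {M : Matrix A A ℝ} {C : ℝ} (hM : ∀ i j, |M i j| ≤ C)
    {θ π : A → ℝ} (hθ : inSimplex θ) (hπ : inSimplex π) (i : A) :
    |((M + Mᵀ) *ᵥ (θ - π)) i| ≤ 4 * C := by
  have hMM (i j : A) : |(M + Mᵀ) i j| ≤ 2 * C := by
    simp only [Matrix.add_apply, transpose_apply]
    linarith [abs_add_le (M i j) (M j i), hM i j, hM j i]
  have hC : 0 ≤ C := (abs_nonneg _).trans (hM i i)
  calc |((M + Mᵀ) *ᵥ (θ - π)) i| ≤ 2 * C * ∑ j, |θ j - π j| :=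
        abs_mulVec_apply_le hMM _ i
    _ ≤ 2 * C * 2 := mul_le_mul_of_nonneg_left (sum_abs_sub_le_two hθ hπ) (by linarith)
    _ = 4 * C := by ring

end LimitDrift

/-- For `a = x u` this is not a transition rate; it only ever multiplies quantities that
vanish at `x`. -/
def pinRate {V A : Type*} [Fintype V] [DecidableEq V] (E : Finset (V × V)) (ρ : ℝ)
    (P : A → A → ℝ) (φ : A → A → A → ℝ) (x : V → A) (u : V) (a : A) : ℝ :=
  (1 - ρ) * (1 / (Fintype.card V : ℝ)) * P (x u) a
    + (ρ / (E.card : ℝ)) * ∑ e ∈ E.filter fun e => e.1 = u, φ (x u) a (x e.2)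

section Rates

variable {V A : Type*} [Fintype V] [DecidableEq V] [Fintype A] {E : Finset (V × V)} {ρ : ℝ}
  {P : A → A → ℝ} {φ : A → A → A → ℝ}

theorem sum_sum_pinRate_mul (x : V → A) (h : V → A → ℝ) :
    ∑ u, ∑ a, pinRate E ρ P φ x u a * h u a
      = (1 - ρ) / Fintype.card V * ∑ u, ∑ a, P (x u) a * h u a
        + ρ / #E * ∑ e ∈ E, ∑ a, φ (x e.1) a (x e.2) * h e.1 a := by
  have hedge : ∑ u, ∑ a, (∑ e ∈ E with e.1 = u, φ (x u) a (x e.2)) * h u a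
      = ∑ e ∈ E, ∑ a, φ (x e.1) a (x e.2) * h e.1 a := by
    rw [← sum_fiberwise E Prod.fst]
    refine sum_congr rfl fun u _ => ?_
    simp_rw [sum_mul]
    rw [sum_comm]
    refine sum_congr rfl fun e he => ?_
    rw [(mem_filter.1 he).2]
  simp only [pinRate, add_mul, sum_add_distrib, mul_assoc, ← mul_sum, hedge]
  ring

theorem pinRate_nonneg (h : IsPinModel E ρ P φ) (x : V → A) (u : V) (a : A) :
    0 ≤ pinRate E ρ P φ x u a := by
  obtain ⟨hρ0, hρ1, hP, -, hφ, -⟩ := h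
  have : 0 ≤ 1 - ρ := by linarith
  unfold pinRate
  exact add_nonneg (mul_nonneg (by positivity) (hP _ _))
    (mul_nonneg (by positivity) (sum_nonneg fun e _ => hφ _ _ _))

theorem sum_sum_pinRate (h : IsPinModel E ρ P φ) [Nonempty V] (x : V → A) :
    ∑ u, ∑ a, pinRate E ρ P φ x u a = 1 := by
  obtain ⟨-, -, -, hProw, -, hφrow, hE, -⟩ := h
  have := sum_sum_pinRate_mul (E := E) (ρ := ρ) (P := P) (φ := φ) x fun _ _ => 1
  simp only [mul_one, hProw, hφrow, sum_const, card_univ] at this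
  rw [this]
  have : (#E : ℝ) ≠ 0 := by exact_mod_cast hE.card_pos.ne'
  have : (Fintype.card V : ℝ) ≠ 0 := by exact_mod_cast Fintype.card_ne_zero
  field_simp
  ring

end Rates

theorem eq_of_update_eq_update {V A : Type*} [DecidableEq V] {x : V → A} {u u' : V}
    {a a' : A} (ha : a ≠ x u) (h : Function.update x u a = Function.update x u' a') :
    u = u' ∧ a = a' := by
  have hu := congrFun h u
  by_cases huu : u = u'
  · subst huu; simpa using hu
  · simp [Function.update_of_ne huu] at hu; exact absurd hu ha

section Transitions

open Matrix

variable {V A : Type*} [Fintype V] [DecidableEq V] [DecidableEq A] {E : Finset (V × V)} {ρ : ℝ}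
  {P : A → A → ℝ} {φ : A → A → A → ℝ}

theorem Toff_update {x : V → A} {u : V} {a : A} (ha : a ≠ x u) :
    Toff E ρ P φ x (Function.update x u a) = pinRate E ρ P φ x u a := by
  have hdiff : (univ.filter fun v => x v ≠ Function.update x u a v) = {u} := by
    ext v
    by_cases hv : v = u
    · subst hv; simp [Ne.symm ha]
    · simp [hv]
  rw [Toff, hdiff, if_pos (card_singleton u), sum_singleton, Function.update_self, pinRate]

theorem exists_eq_update_of_Toff_ne_zero {x y : V → A} (h : Toff E ρ P φ x y ≠ 0) :
    ∃ u, y = Function.update x u (y u) := by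
  rw [Toff] at h
  split_ifs at h with hcard
  · obtain ⟨u, hu⟩ := card_eq_one.1 hcard
    refine ⟨u, funext fun v => ?_⟩
    by_cases hv : v = u
    · subst hv; simp
    · have : v ∉ ({v | x v ≠ y v} : Finset V) := by rw [hu]; simpa using hv
      simpa [hv, eq_comm] using this
  · exact absurd rfl h

variable [Fintype A]

theorem sum_pinTrans (x : V → A) : ∑ y, pinTrans E ρ P φ x y = 1 := by
  have hx : Toff E ρ P φ x x = 0 := by simp [Toff]
  have hoff : ∑ y ∈ univ.erase x, pinTrans E ρ P φ x y = ∑ z, Toff E ρ P φ x z := by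
    rw [← add_sum_erase univ (Toff E ρ P φ x) (mem_univ x), hx, zero_add]
    exact sum_congr rfl fun y hy => if_neg (Ne.symm (ne_of_mem_erase hy))
  rw [← add_sum_erase _ _ (mem_univ x), hoff, pinTrans, if_pos rfl, sub_add_cancel]

theorem IsStationaryPin.sum_mul_sum_pinTrans_mul_sub_eq_zero {μ : (V → A) → ℝ}
    (hμ : IsStationaryPin E ρ P φ μ) (g : (V → A) → ℝ) :
    ∑ x, μ x * ∑ y, pinTrans E ρ P φ x y * (g y - g x) = 0 := by
  have hflow : ∑ x, μ x * ∑ y, pinTrans E ρ P φ x y * g y = ∑ y, μ y * g y := by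
    simp only [mul_sum, ← mul_assoc]
    rw [sum_comm]
    simp only [← sum_mul, hμ.2.2]
  simp only [mul_sub, sum_sub_distrib, ← sum_mul, sum_pinTrans, one_mul, hflow, sub_self]

theorem IsStationaryPin.sum_mul_le_of_le_sub_drift {μ : (V → A) → ℝ}
    (hμ : IsStationaryPin E ρ P φ μ) {f g : (V → A) → ℝ} {c κ : ℝ}
    (hfg : ∀ x, f x ≤ c - κ * ∑ y, pinTrans E ρ P φ x y * (g y - g x)) :
    ∑ x, μ x * f x ≤ c :=
  calc ∑ x, μ x * f x ≤ ∑ x, μ x * (c - κ * ∑ y, pinTrans E ρ P φ x y * (g y - g x)) :=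
        sum_le_sum fun x _ => mul_le_mul_of_nonneg_left (hfg x) (hμ.1 x)
    _ = c * ∑ x, μ x - κ * ∑ x, μ x * ∑ y, pinTrans E ρ P φ x y * (g y - g x) := by
        rw [mul_sum, mul_sum, ← sum_sub_distrib]
        exact sum_congr rfl fun x _ => by ring
    _ = c := by rw [hμ.2.1, hμ.sum_mul_sum_pinTrans_mul_sub_eq_zero]; ring

theorem sum_pinTrans_mul_eq_sum_pinRate_mul {x : V → A} {F : (V → A) → ℝ} (hF : F x = 0) :
    ∑ y, pinTrans E ρ P φ x y * F y
      = ∑ u, ∑ a, pinRate E ρ P φ x u a * F (Function.update x u a) := by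
  set G : (V → A) → ℝ := fun y => Toff E ρ P φ x y * F y
  have hGx : G x = 0 := by simp [G, hF]
  have hpin : ∀ y, pinTrans E ρ P φ x y * F y = G y := fun y => by
    by_cases h : x = y
    · subst h; simp [hF, hGx]
    · simp [G, pinTrans, h]
  have hrate : ∀ u a,
      pinRate E ρ P φ x u a * F (Function.update x u a) = G (Function.update x u a) := by
    intro u a
    by_cases ha : a = x u
    · subst ha; simp [hF, hGx]
    · simp [G, Toff_update ha]
  have hne : ∀ p : V × A, G (Function.update x p.1 p.2) ≠ 0 → p.2 ≠ x p.1 := by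
    rintro ⟨u, a⟩ hG (h : a = x u)
    simp [h, hGx] at hG
  simp_rw [hpin, hrate]
  rw [← Fintype.sum_prod_type' (f := fun u a => G (Function.update x u a))]
  symm
  refine sum_bij_ne_zero (fun p _ _ => Function.update x p.1 p.2) (fun _ _ _ => mem_univ _)
    (fun p _ hp q _ _ hpq => ?_) (fun y _ hy => ?_) (fun _ _ _ => rfl)
  · obtain ⟨h1, h2⟩ := eq_of_update_eq_update (hne p hp) hpq
    exact Prod.ext h1 h2
  · obtain ⟨u, hu⟩ := exists_eq_update_of_Toff_ne_zero (left_ne_zero_of_mul hy)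
    exact ⟨(u, y u), mem_univ _, hu ▸ hy, hu.symm⟩

theorem meanDrift_eq_sum_sum_pinRate_mul [Nonempty V] (x : V → A) (i : A) :
    meanDrift E ρ P φ x i
      = ∑ u, ∑ a, pinRate E ρ P φ x u a *
          ((Pi.single a 1 : A → ℝ) i - (Pi.single (x u) 1 : A → ℝ) i) := by
  have hn : (Fintype.card V : ℝ) ≠ 0 := by exact_mod_cast Fintype.card_ne_zero
  rw [meanDrift, sum_pinTrans_mul_eq_sum_pinRate_mul (F := fun y => confType y i - confType x i)
    (sub_self _), mul_sum]
  refine sum_congr rfl fun u _ => ?_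
  rw [mul_sum]
  refine sum_congr rfl fun a _ => ?_
  rw [confType_update]
  simp only [Pi.add_apply, Pi.smul_apply, Pi.sub_apply, smul_eq_mul]
  field_simp
  ring

theorem meanDrift_eq [Nonempty V] (hP : ∀ i, ∑ j, P i j = 1)
    (hφ : ∀ i ℓ, ∑ j, φ i j ℓ = 1) (x : V → A) (i : A) :
    meanDrift E ρ P φ x i
      = (1 - ρ) * (∑ j, P j i * confType x j - confType x i) + ρ * Qop φ (boundary E x) i := by
  have hsingle (f : A → ℝ) : ∑ a, f a * (Pi.single a 1 : A → ℝ) i = f i := by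
    simp [Pi.single_apply]
  have hnode :
      ∑ u, ∑ a, P (x u) a * ((Pi.single a 1 : A → ℝ) i - (Pi.single (x u) 1 : A → ℝ) i)
      = ∑ u, (P (x u) i - (Pi.single (x u) 1 : A → ℝ) i) := by
    simp [mul_sub, sum_sub_distrib, hsingle, ← sum_mul, hP]
  have hedge : ∑ e ∈ E, ∑ a, φ (x e.1) a (x e.2) *
        ((Pi.single a 1 : A → ℝ) i - (Pi.single (x e.1) 1 : A → ℝ) i)
      = ∑ e ∈ E, (φ (x e.1) i (x e.2) - (Pi.single (x e.1) 1 : A → ℝ) i) := by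
    simp [mul_sub, sum_sub_distrib, hsingle (fun a => φ _ a _), ← sum_mul, hφ]
  have hnode' : (∑ u, (P (x u) i - (Pi.single (x u) 1 : A → ℝ) i)) / Fintype.card V
      = ∑ j, P j i * confType x j - confType x i := by
    rw [← sum_confType_mul x fun j => P j i - (Pi.single j 1 : A → ℝ) i]
    simp [mul_sub, sum_sub_distrib, mul_comm, hsingle (confType x)]
  have hedge' : (∑ e ∈ E, (φ (x e.1) i (x e.2) - (Pi.single (x e.1) 1 : A → ℝ) i)) / #E
      = Qop φ (boundary E x) i := by
    rw [← sum_boundary_mul x fun j ℓ => φ j i ℓ - (Pi.single j 1 : A → ℝ) i]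
    simp only [Qop, mul_sub, sum_sub_distrib]
    rw [sum_comm]
    simp [Pi.single_apply]
  rw [meanDrift_eq_sum_sum_pinRate_mul, sum_sum_pinRate_mul, hnode, hedge, ← hnode', ← hedge']
  ring

theorem meanDrift_sub_limitDrift [Nonempty V] (hP : ∀ i, ∑ j, P i j = 1)
    (hφ : ∀ i ℓ, ∑ j, φ i j ℓ = 1) (x : V → A) (i : A) :
    meanDrift E ρ P φ x i - limitDrift ρ P φ (confType x) i
      = ρ * Qop φ (fun j ℓ => boundary E x j ℓ - confType x j * confType x ℓ) i := by
  rw [meanDrift_eq hP hφ, limitDrift_eq (sum_confType x),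
    show (fun j ℓ => boundary E x j ℓ - confType x j * confType x ℓ)
      = boundary E x - fun j ℓ => confType x j * confType x ℓ from rfl, Qop_sub]
  ring

theorem meanDrift_of_forgetful [Nonempty V] {R : A → A → ℝ} (hP : ∀ i, ∑ j, P i j = 1)
    (hφ : ∀ i ℓ, ∑ j, φ i j ℓ = 1) (hforget : ∀ i j ℓ, φ i j ℓ = R ℓ j)
    (x : V → A) :
    meanDrift E ρ P φ x
      = (confType x ᵥ* Matrix.of (fun i j => (1 - ρ) * P i j + ρ * R i j) - confType x)
        + ρ • Qop φ (fun j ℓ => boundary E x j ℓ - confType x j * confType x ℓ) := by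
  ext i
  have h := meanDrift_sub_limitDrift (E := E) (ρ := ρ) hP hφ x i
  rw [limitDrift_of_forgetful hforget (sum_confType x)] at h
  simp only [Pi.add_apply, Pi.smul_apply, smul_eq_mul]
  linarith

theorem card_mul_sum_pinTrans_mul_quadForm_sub (M : Matrix A A ℝ) (π : A → ℝ) (x : V → A) :
    Fintype.card V * ∑ y, pinTrans E ρ P φ x y *
        ((confType y - π) ⬝ᵥ M *ᵥ (confType y - π)
          - (confType x - π) ⬝ᵥ M *ᵥ (confType x - π))
      = ((M + Mᵀ) *ᵥ (confType x - π)) ⬝ᵥ meanDrift E ρ P φ x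
        + Fintype.card V * ∑ y, pinTrans E ρ P φ x y *
            ((confType y - confType x) ⬝ᵥ M *ᵥ (confType y - confType x)) := by
  set w := (M + Mᵀ) *ᵥ (confType x - π)
  have hexp (y : V → A) : (confType y - π) ⬝ᵥ M *ᵥ (confType y - π)
      - (confType x - π) ⬝ᵥ M *ᵥ (confType x - π)
      = w ⬝ᵥ (confType y - confType x)
        + (confType y - confType x) ⬝ᵥ M *ᵥ (confType y - confType x) := by
    rw [show confType y - π = (confType x - π) + (confType y - confType x) by abel,
      add_dotProduct_mulVec_add]
    ring
  have hdrift :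
      Fintype.card V * ∑ y, pinTrans E ρ P φ x y * (w ⬝ᵥ (confType y - confType x))
        = w ⬝ᵥ meanDrift E ρ P φ x := by
    simp only [meanDrift, dotProduct, Pi.sub_apply, mul_sum]
    rw [sum_comm]
    exact sum_congr rfl fun _ _ => sum_congr rfl fun _ _ => by ring
  simp only [hexp, mul_add, sum_add_distrib, hdrift]

theorem sum_abs_confType_update_sub_le (x : V → A) (u : V) (a : A) :
    ∑ i, |(confType (Function.update x u a) - confType x) i| ≤ 2 / Fintype.card V := by
  have hsingle : ∑ i, |(Pi.single a 1 - Pi.single (x u) 1 : A → ℝ) i| ≤ 2 :=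
    calc _ ≤ ∑ i, (|(Pi.single a 1 : A → ℝ) i| + |(Pi.single (x u) 1 : A → ℝ) i|) :=
          sum_le_sum fun i _ => abs_sub _ _
      _ = 2 := by simp [sum_add_distrib, Pi.single_apply, abs_ite]; norm_num
  rw [confType_update, add_sub_cancel_left, div_eq_inv_mul]
  simp only [Pi.smul_apply, smul_eq_mul, abs_mul, ← mul_sum, abs_inv, Nat.abs_cast]
  exact mul_le_mul_of_nonneg_left hsingle (by positivity)

theorem abs_card_mul_sum_pinTrans_mul_quadForm_le (h : IsPinModel E ρ P φ) [Nonempty V]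
    {M : Matrix A A ℝ} {C : ℝ} (hM : ∀ i j, |M i j| ≤ C) (x : V → A) :
    |Fintype.card V * ∑ y, pinTrans E ρ P φ x y *
        ((confType y - confType x) ⬝ᵥ M *ᵥ (confType y - confType x))|
      ≤ 4 * C / Fintype.card V := by
  have hn : (0 : ℝ) < Fintype.card V := by exact_mod_cast Fintype.card_pos
  have hjump (u : V) (a : A) :
      |(confType (Function.update x u a) - confType x) ⬝ᵥ
          M *ᵥ (confType (Function.update x u a) - confType x)|
        ≤ 4 * C / Fintype.card V ^ 2 := by
    have hC : 0 ≤ C := (abs_nonneg _).trans (hM a a)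
    calc _ ≤ C * (2 / Fintype.card V) ^ 2 := (abs_dotProduct_mulVec_self_le hM _).trans
          (mul_le_mul_of_nonneg_left (pow_le_pow_left₀ (sum_nonneg fun _ _ => abs_nonneg _)
            (sum_abs_confType_update_sub_le x u a) 2) hC)
      _ = 4 * C / Fintype.card V ^ 2 := by ring
  rw [sum_pinTrans_mul_eq_sum_pinRate_mul (by simp), abs_mul, abs_of_pos hn]
  calc (Fintype.card V : ℝ) * |∑ u, ∑ a, pinRate E ρ P φ x u a * _|
      ≤ Fintype.card V *
          ∑ u, ∑ a, pinRate E ρ P φ x u a * (4 * C / Fintype.card V ^ 2) := by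
        refine mul_le_mul_of_nonneg_left ((abs_sum_le_sum_abs _ _).trans (sum_le_sum fun u _ =>
          (abs_sum_le_sum_abs _ _).trans (sum_le_sum fun a _ => ?_))) hn.le
        rw [abs_mul, abs_of_nonneg (pinRate_nonneg h x u a)]
        exact mul_le_mul_of_nonneg_left (hjump u a) (pinRate_nonneg h x u a)
    _ = 4 * C / Fintype.card V := by
        simp only [← sum_mul, sum_sum_pinRate h]
        field_simp

theorem dotProduct_self_le_drift_of_forgetful [Nonempty A] {R S M : Matrix A A ℝ} {C : ℝ}
    {π : A → ℝ} (h : IsPinModel E ρ P φ) (hforget : ∀ i j ℓ, φ i j ℓ = R ℓ j)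
    (hR : ∀ i j, 0 ≤ R i j) (hRrow : ∀ i, ∑ j, R i j = 1) (hV : 2 ≤ Fintype.card V)
    (hS : S = Matrix.of fun i j => (1 - ρ) * P i j + ρ * R i j)
    (hlyap : ∀ v : A → ℝ, ∑ i, v i = 0 →
      ((M + Mᵀ) *ᵥ v) ⬝ᵥ (v ᵥ* S - v) ≤ -(v ⬝ᵥ v))
    (hM : ∀ i j, |M i j| ≤ C) (hπ : inSimplex π) (hπS : π ᵥ* S = π) (x : V → A) :
    (confType x - π) ⬝ᵥ (confType x - π)
      ≤ 40 * C * Fintype.card A * mixingGap E + 4 * C / Fintype.card V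
        - Fintype.card V * ∑ y, pinTrans E ρ P φ x y *
          ((confType y - π) ⬝ᵥ M *ᵥ (confType y - π)
            - (confType x - π) ⬝ᵥ M *ᵥ (confType x - π)) := by
  have : Nonempty V := Fintype.card_pos_iff.1 (by omega)
  have herr := abs_card_mul_sum_pinTrans_mul_quadForm_le h hM x
  have hgen := card_mul_sum_pinTrans_mul_quadForm_sub (E := E) (ρ := ρ) (P := P) (φ := φ) M π x
  obtain ⟨hρ0, hρ1, -, hProw, -, hφrow, -, hloop⟩ := h
  have hθ := inSimplex_confType x
  have hξ := sum_abs_sum_boundary_sub_mul_le hloop hV x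
  have hdrift := meanDrift_of_forgetful (E := E) (ρ := ρ) hProw hφrow hforget x
  rw [← hS] at hdrift
  set θ := confType x
  set v := θ - π
  set w := (M + Mᵀ) *ᵥ v
  have hv : ∑ i, v i = 0 := by simp [v, sum_sub_distrib, hθ.2, hπ.2]
  have hly : w ⬝ᵥ (θ ᵥ* S - θ) ≤ -(v ⬝ᵥ v) := by
    simpa [v, sub_vecMul, hπS] using hlyap v hv
  have hQ : ρ * (w ⬝ᵥ Qop φ fun j ℓ => boundary E x j ℓ - θ j * θ ℓ)
      ≤ 40 * C * Fintype.card A * mixingGap E := by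
    have hw := abs_add_transpose_mulVec_sub_le hM hθ hπ
    obtain ⟨i₀⟩ := ‹Nonempty A›
    have hC : 0 ≤ C := (abs_nonneg _).trans (hM i₀ i₀)
    calc _ ≤ ρ * |w ⬝ᵥ Qop φ fun j ℓ => boundary E x j ℓ - θ j * θ ℓ| :=
          mul_le_mul_of_nonneg_left (le_abs_self _) hρ0
      _ ≤ 1 * (4 * C * (10 * Fintype.card A * mixingGap E)) :=
          mul_le_mul hρ1 ((abs_dotProduct_Qop_le_of_forgetful hforget hR hRrow hw _).trans
            (mul_le_mul_of_nonneg_left hξ (by linarith))) (abs_nonneg _) zero_le_one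
      _ = 40 * C * Fintype.card A * mixingGap E := by ring
  rw [hgen, hdrift, dotProduct_add, dotProduct_smul, smul_eq_mul]
  linarith [(abs_le.1 herr).2]

end Transitions

section MassOf

variable {X : Type*} [Fintype X] {μ : X → ℝ}

theorem massOf_nonneg (hμ : ∀ x, 0 ≤ μ x) (p : X → Prop) : 0 ≤ massOf μ p :=
  sum_nonneg fun x _ => by split_ifs <;> simp [hμ x]

theorem massOf_add_massOf_not (hμ : ∑ x, μ x = 1) (p : X → Prop) :
    massOf μ p + massOf μ (fun x => ¬ p x) = 1 := by
  rw [massOf, massOf, ← sum_add_distrib, ← hμ]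
  exact sum_congr rfl fun x _ => by split_ifs <;> simp_all

theorem mul_massOf_le_sum_mul (hμ : ∀ x, 0 ≤ μ x) {f : X → ℝ} (hf : ∀ x, 0 ≤ f x)
    (ε : ℝ) :
    ε * massOf μ (fun x => ε ≤ f x) ≤ ∑ x, μ x * f x := by
  rw [massOf, mul_sum]
  refine sum_le_sum fun x _ => ?_
  split_ifs with h
  · rw [mul_comm]; exact mul_le_mul_of_nonneg_left h (hμ x)
  · simpa using mul_nonneg (hμ x) (hf x)

end MassOf

theorem tendsto_massOf_lt_of_sum_mul_le {Y : ℕ → Type*} [∀ n, Fintype (Y n)]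
    {ν f : ∀ n, Y n → ℝ} {b : ℕ → ℝ}
    (hν : ∀ᶠ n in atTop, (∀ y, 0 ≤ ν n y) ∧ ∑ y, ν n y = 1)
    (hf : ∀ n y, 0 ≤ f n y)
    (hb : ∀ᶠ n in atTop, ∑ y, ν n y * f n y ≤ b n) (hb0 : Tendsto b atTop (nhds 0))
    {ε : ℝ} (hε : 0 < ε) :
    Tendsto (fun n => massOf (ν n) fun y => f n y < ε) atTop (nhds 1) := by
  have hlow : Tendsto (fun n => 1 - b n / ε) atTop (nhds 1) := by
    simpa using (hb0.div_const ε).const_sub 1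
  refine tendsto_of_tendsto_of_tendsto_of_le_of_le' hlow tendsto_const_nhds ?_ ?_
  · filter_upwards [hν, hb] with n ⟨hν0, hν1⟩ hbn
    have hsplit := massOf_add_massOf_not hν1 fun y => f n y < ε
    simp only [not_lt] at hsplit
    have hmarkov : massOf (ν n) (fun y => ε ≤ f n y) ≤ b n / ε := by
      rw [le_div_iff₀ hε, mul_comm]
      exact (mul_massOf_le_sum_mul hν0 (hf n) ε).trans hbn
    linarith
  · filter_upwards [hν] with n ⟨hν0, hν1⟩
    have hsplit := massOf_add_massOf_not hν1 fun y => f n y < ε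
    linarith [massOf_nonneg hν0 fun y => ¬ f n y < ε]

/-- Proposition: concentration for forgetful PIN models on ATM networks.
For a forgetful PIN model (`φ_{ij}(ℓ) = R_{ℓj}`) on an ATM graph sequence, if
`S = (1−ρ)P + ρR` is irreducible with invariant probability vector `π`, then
`μ_n({x : ‖θ(x) − π‖₂ < δ}) → 1` as `n → ∞`, for every `δ > 0`. -/
theorem concentration_forgetful {A : Type*} [Fintype A] [DecidableEq A] [Nonempty A]
    (ρ : ℝ) (P : A → A → ℝ) (φ : A → A → A → ℝ) (R : A → A → ℝ)
    (hR : ∀ i j, 0 ≤ R i j) (hRrow : ∀ i, ∑ j, R i j = 1)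
    (hforget : ∀ i j ℓ, φ i j ℓ = R ℓ j)
    (E : (n : ℕ) → Finset (Fin n × Fin n))
    (hmodel : ∀ n, 2 ≤ n → IsPinModel (E n) ρ P φ)
    (hATM : Tendsto (fun n => mixingGap (E n)) atTop (nhds 0))
    (S : Matrix A A ℝ) (hS : S = Matrix.of fun i j => (1 - ρ) * P i j + ρ * R i j)
    (hirr : ∀ i j : A, ∃ k : ℕ, 1 ≤ k ∧ 0 < (S ^ k) i j)
    (π : A → ℝ) (hπ : inSimplex π) (hπinv : ∀ i, ∑ j, S j i * π j = π i)
    (μ : (n : ℕ) → (Fin n → A) → ℝ)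
    (hμ : ∀ n, 2 ≤ n → IsStationaryPin (E n) ρ P φ (μ n)) :
    ∀ δ > (0 : ℝ),
      Tendsto (fun n => massOf (μ n) (fun x : Fin n → A =>
          Real.sqrt (∑ i, (confType x i - π i) ^ 2) < δ))
        atTop (nhds 1) := by
  intro δ hδ
  obtain ⟨hρ0, hρ1, hP, hProw, -⟩ := hmodel 2 le_rfl
  have hSsto : S ∈ Matrix.rowStochastic ℝ A := by
    rw [Matrix.mem_rowStochastic_iff_sum, hS]
    refine ⟨fun i j => add_nonneg (mul_nonneg (by linarith) (hP i j)) (mul_nonneg hρ0 (hR i j)),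
      fun i => ?_⟩
    simp [sum_add_distrib, ← mul_sum, hProw, hRrow]
  obtain ⟨M, hlyap⟩ := Matrix.exists_lyapunov_matrix hSsto
    ((Matrix.isIrreducible_iff_exists_pow_pos hSsto.1).2 hirr)
  obtain ⟨C, hC⟩ := Finite.exists_le fun p : A × A => |M p.1 p.2|
  have hπS : Matrix.vecMul π S = π := funext fun i => by
    simpa [Matrix.vecMul, dotProduct, mul_comm] using hπinv i
  have hmoment : ∀ n ≥ 2, ∑ x, μ n x * ∑ i, (confType x i - π i) ^ 2
      ≤ 40 * C * Fintype.card A * mixingGap (E n) + 4 * C / n := by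
    intro n hn
    simpa [dotProduct, sq] using (hμ n hn).sum_mul_le_of_le_sub_drift
      (dotProduct_self_le_drift_of_forgetful (hmodel n hn) hforget hR hRrow (by simpa using hn) hS
        hlyap (fun i j => hC (i, j)) hπ hπS)
  have hbound : Tendsto (fun n : ℕ => 40 * C * Fintype.card A * mixingGap (E n) + 4 * C / n)
      atTop (nhds 0) := by
    simpa using (hATM.const_mul _).add (tendsto_const_div_atTop_nhds_zero_nat (4 * C))
  simpa [Real.sqrt_lt' hδ] using tendsto_massOf_lt_of_sum_mul_le
    (eventually_atTop.2 ⟨2, fun n hn => ⟨(hμ n hn).1, (hμ n hn).2.1⟩⟩)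
    (fun n x => sum_nonneg fun i _ => sq_nonneg _) (eventually_atTop.2 ⟨2, hmoment⟩) hbound
    (pow_pos hδ 2)

end
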